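/- Let P_X be a discrete prior with finite support, zero mean and unit variance, and suppose that as λ → ∞ the saddle solution satisfies r* → ∞ and λ(1 - q*) → 0, λ(1 - q*²) → 0. Then the free-entropy term E_{ξ,H} ln ∫ dP_X(η) e^{(ξ√r + Hr)η - rη²/2} equals r/2 + E_H ln P_X({H}) + o(1) as r → ∞, and consequently ι(r*, q*; α, λ) → H(X) = -∑_x P_X(x) ln P_X(x) as λ → ∞. -/

import Mathlib

open MeasureTheory ProbabilityTheory Filter
open scoped ENNReal NNReal

/-- Quenched free entropy for a finitely-supported discrete prior with atoms `s`
and weights `w`: `Φ(r) = E_{ξ,H} ln ∑_η w(η) e^{(ξ√r + Hr)η - rη²/2}`. -/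
noncomputable def gibbsLogZFin (s : Finset ℝ) (w : ℝ → ℝ) (r : ℝ) : ℝ :=
  ∑ x₀ ∈ s, w x₀ *
    ∫ z, Real.log (∑ η ∈ s, w η *
        Real.exp ((Real.sqrt r * z + r * x₀) * η - r * η ^ 2 / 2))
      ∂(gaussianReal 0 1)

/-- The mutual-information potential `ι(r,q;α,λ)` for a discrete prior. -/
noncomputable def iotaPotFin (s : Finset ℝ) (w : ℝ → ℝ) (α lam r q : ℝ) : ℝ :=
  r * q / 2 + (1 / (4 * α)) * Real.log (1 + lam * α * (1 - q ^ 2))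
    - gibbsLogZFin s w r

/-! ### Gaussian integral helpers -/

lemma gauss_exp_pdf (t : ℝ) (x : ℝ) :
    Real.exp (t * x) * gaussianPDFReal 0 1 x = Real.exp (t^2/2) * gaussianPDFReal t 1 x := by
  simp only [gaussianPDFReal, NNReal.coe_one, mul_one]
  rw [mul_comm (Real.exp (t*x)), mul_comm (Real.exp (t^2/2)), mul_assoc, mul_assoc,
    ← Real.exp_add, ← Real.exp_add]
  congr 1
  ring

lemma gauss_integral_exp (t : ℝ) :
    ∫ z, Real.exp (t * z) ∂(gaussianReal 0 1) = Real.exp (t^2/2) := by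
  rw [gaussianReal_of_var_ne_zero 0 one_ne_zero, gaussianPDF_def]
  have h : ∀ x : ℝ, ENNReal.ofReal (gaussianPDFReal 0 1 x)
      = ((gaussianPDFReal 0 1 x).toNNReal : ℝ≥0∞) := fun x => rfl
  simp only [h]
  rw [integral_withDensity_eq_integral_smul
    ((measurable_gaussianPDFReal 0 1).real_toNNReal) (fun z => Real.exp (t * z))]
  have : ∀ x : ℝ, ((gaussianPDFReal 0 1 x).toNNReal : ℝ≥0) • Real.exp (t*x)
      = Real.exp (t^2/2) * gaussianPDFReal t 1 x := by
    intro x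
    rw [NNReal.smul_def, smul_eq_mul, Real.coe_toNNReal _ (gaussianPDFReal_nonneg 0 1 x),
      mul_comm]
    exact gauss_exp_pdf t x
  simp only [this]
  rw [integral_const_mul, integral_gaussianPDFReal_eq_one t one_ne_zero, mul_one]

lemma gauss_integrable_exp (t : ℝ) :
    Integrable (fun z => Real.exp (t * z)) (gaussianReal 0 1) := by
  rw [gaussianReal_of_var_ne_zero 0 one_ne_zero, gaussianPDF_def]
  have h : ∀ x : ℝ, ENNReal.ofReal (gaussianPDFReal 0 1 x)
      = ((gaussianPDFReal 0 1 x).toNNReal : ℝ≥0∞) := fun x => rfl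
  simp only [h]
  rw [integrable_withDensity_iff_integrable_smul
    ((measurable_gaussianPDFReal 0 1).real_toNNReal)]
  have : ∀ x : ℝ, ((gaussianPDFReal 0 1 x).toNNReal : ℝ≥0) • Real.exp (t*x)
      = Real.exp (t^2/2) * gaussianPDFReal t 1 x := by
    intro x
    rw [NNReal.smul_def, smul_eq_mul, Real.coe_toNNReal _ (gaussianPDFReal_nonneg 0 1 x),
      mul_comm]
    exact gauss_exp_pdf t x
  refine (integrable_congr (Filter.Eventually.of_forall this)).mpr ?_
  exact (integrable_gaussianPDFReal t 1).const_mul _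

lemma gauss_integrable_id :
    Integrable (fun z : ℝ => z) (gaussianReal 0 1) := by
  have h := (gauss_integrable_exp 1).add (gauss_integrable_exp (-1))
  refine h.mono' measurable_id.aestronglyMeasurable ?_
  refine Filter.Eventually.of_forall fun x => ?_
  simp only [one_mul, neg_one_mul, Real.norm_eq_abs, Pi.add_apply]
  have h1 := Real.add_one_le_exp x
  have h2 := Real.add_one_le_exp (-x)
  have h3 := Real.exp_nonneg x
  have h4 := Real.exp_nonneg (-x)
  rw [abs_le]
  constructor <;> linarith

lemma gauss_integral_id :
    ∫ z, z ∂(gaussianReal 0 1) = 0 := by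
  have hmap : Measure.map (fun x : ℝ => (-1 : ℝ) * x) (gaussianReal 0 1) = gaussianReal 0 1 := by
    rw [gaussianReal_map_const_mul (-1)]
    norm_num
  have key : ∫ z, z ∂(gaussianReal 0 1) = - ∫ z, z ∂(gaussianReal 0 1) := by
    conv_lhs => rw [← hmap]
    rw [integral_map (φ := fun x : ℝ => (-1:ℝ) * x) (f := fun y : ℝ => y)
      ((measurable_id.const_mul (-1:ℝ)).aemeasurable)
      measurable_id.aestronglyMeasurable]
    simp only [neg_one_mul]
    exact integral_neg _
  linarith

lemma gauss_integrable_exp_linear (t b : ℝ) :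
    Integrable (fun z => Real.exp (t * z + b)) (gaussianReal 0 1) := by
  simp only [Real.exp_add]
  exact (gauss_integrable_exp t).mul_const _

/-! ### elementary inequalities -/

lemma my_sqrt_add_le {a b : ℝ} (ha : 0 ≤ a) (hb : 0 ≤ b) :
    Real.sqrt (a + b) ≤ Real.sqrt a + Real.sqrt b := by
  rw [show Real.sqrt a + Real.sqrt b = Real.sqrt ((Real.sqrt a + Real.sqrt b)^2) by
    rw [Real.sqrt_sq (by positivity)]]
  apply Real.sqrt_le_sqrt
  nlinarith [Real.sq_sqrt ha, Real.sq_sqrt hb, Real.sqrt_nonneg a, Real.sqrt_nonneg b]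

lemma my_sqrt_sum_le {ι : Type*} (t : Finset ι) (a : ι → ℝ) (h : ∀ i ∈ t, 0 ≤ a i) :
    Real.sqrt (∑ i ∈ t, a i) ≤ ∑ i ∈ t, Real.sqrt (a i) := by
  induction t using Finset.cons_induction with
  | empty => simp
  | cons i t hi ih =>
    rw [Finset.sum_cons, Finset.sum_cons]
    have h1 : 0 ≤ a i := h i (Finset.mem_cons_self i t)
    have h2 : ∀ j ∈ t, 0 ≤ a j := fun j hj => h j (Finset.mem_cons_of_mem hj)
    calc Real.sqrt (a i + ∑ j ∈ t, a j)
        ≤ Real.sqrt (a i) + Real.sqrt (∑ j ∈ t, a j) :=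
          my_sqrt_add_le h1 (Finset.sum_nonneg h2)
      _ ≤ Real.sqrt (a i) + ∑ j ∈ t, Real.sqrt (a j) := by
          exact add_le_add le_rfl (ih h2)

lemma my_log_one_add_le {S : ℝ} (hS : 0 ≤ S) :
    Real.log (1 + S) ≤ 2 * Real.sqrt S := by
  have h1 : Real.log (1 + S) = 2 * Real.log (Real.sqrt (1 + S)) := by
    rw [Real.log_sqrt (by linarith)]; ring
  have h2 : Real.log (Real.sqrt (1 + S)) ≤ Real.sqrt (1 + S) - 1 :=
    Real.log_le_sub_one_of_pos (Real.sqrt_pos.mpr (by linarith))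
  have h3 : Real.sqrt (1 + S) ≤ 1 + Real.sqrt S := by
    calc Real.sqrt (1 + S) ≤ Real.sqrt 1 + Real.sqrt S := my_sqrt_add_le zero_le_one hS
      _ = 1 + Real.sqrt S := by rw [Real.sqrt_one]
  linarith

/-! ### The partition function decomposition -/

noncomputable def Tfun (w : ℝ → ℝ) (s : Finset ℝ) (x₀ r z : ℝ) : ℝ :=
  ∑ η ∈ s, (w η / w x₀) * Real.exp ((η - x₀) * (Real.sqrt r * z) - r * (η - x₀) ^ 2 / 2)

variable {s : Finset ℝ} {w : ℝ → ℝ} {x₀ : ℝ}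

lemma Tfun_eq (hw : ∀ x ∈ s, 0 < w x) (hx₀ : x₀ ∈ s) (r z : ℝ) :
    Tfun w s x₀ r z = 1 + ∑ η ∈ s.erase x₀,
      (w η / w x₀) * Real.exp ((η - x₀) * (Real.sqrt r * z) - r * (η - x₀) ^ 2 / 2) := by
  rw [Tfun, ← Finset.add_sum_erase s _ hx₀]
  congr 1
  rw [sub_self, div_self (hw x₀ hx₀).ne']
  norm_num

lemma Tfun_ge_one (hw : ∀ x ∈ s, 0 < w x) (hx₀ : x₀ ∈ s) (r z : ℝ) : 1 ≤ Tfun w s x₀ r z := by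
  rw [Tfun_eq hw hx₀]
  have : 0 ≤ ∑ η ∈ s.erase x₀,
      (w η / w x₀) * Real.exp ((η - x₀) * (Real.sqrt r * z) - r * (η - x₀) ^ 2 / 2) := by
    refine Finset.sum_nonneg fun η hη => ?_
    have := hw η (Finset.mem_of_mem_erase hη)
    have := hw x₀ hx₀
    positivity
  linarith

lemma inner_factor (hw : ∀ x ∈ s, 0 < w x) (hx₀ : x₀ ∈ s) (r z : ℝ) :
    ∑ η ∈ s, w η * Real.exp ((Real.sqrt r * z + r * x₀) * η - r * η ^ 2 / 2)
      = (w x₀ * Real.exp (Real.sqrt r * x₀ * z + r * x₀ ^ 2 / 2)) * Tfun w s x₀ r z := by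
  rw [Tfun, Finset.mul_sum]
  refine Finset.sum_congr rfl fun η hη => ?_
  have hx : w x₀ ≠ 0 := (hw x₀ hx₀).ne'
  rw [mul_mul_mul_comm, mul_comm (w x₀), div_mul_cancel₀ _ hx, ← Real.exp_add]
  congr 1
  ring

lemma continuous_Tfun (r x₀ : ℝ) : Continuous (fun z => Tfun w s x₀ r z) := by
  unfold Tfun
  fun_prop

lemma integrable_Tfun (r : ℝ) :
    Integrable (fun z => Tfun w s x₀ r z) (gaussianReal 0 1) := by
  unfold Tfun
  refine integrable_finset_sum _ fun η _ => ?_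
  have heq : ∀ z : ℝ, (w η / w x₀) * Real.exp ((η - x₀) * (Real.sqrt r * z) - r * (η - x₀) ^ 2 / 2)
      = (w η / w x₀) * Real.exp (((η - x₀) * Real.sqrt r) * z + (-(r * (η - x₀) ^ 2 / 2))) := by
    intro z; congr 1; ring
  simp only [heq]
  exact (gauss_integrable_exp_linear _ _).const_mul _

lemma integrable_logT (hw : ∀ x ∈ s, 0 < w x) (hx₀ : x₀ ∈ s) (r : ℝ) :
    Integrable (fun z => Real.log (Tfun w s x₀ r z)) (gaussianReal 0 1) := by
  refine (integrable_Tfun (w := w) (s := s) (x₀ := x₀) r).mono'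
    ((Real.measurable_log.comp (continuous_Tfun (w := w) (s := s) r x₀).measurable).aestronglyMeasurable)
    (Filter.Eventually.of_forall fun z => ?_)
  have h1 := Tfun_ge_one hw hx₀ r z
  rw [Real.norm_eq_abs, abs_of_nonneg (Real.log_nonneg h1)]
  have := Real.log_le_sub_one_of_pos (lt_of_lt_of_le one_pos h1)
  linarith

lemma logT_le (hw : ∀ x ∈ s, 0 < w x) (hx₀ : x₀ ∈ s) (r z : ℝ) :
    Real.log (Tfun w s x₀ r z) ≤ 2 * ∑ η ∈ s.erase x₀,
      Real.sqrt (w η / w x₀) *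
        Real.exp (((η - x₀) * (Real.sqrt r * z) - r * (η - x₀) ^ 2 / 2) / 2) := by
  rw [Tfun_eq hw hx₀]
  have hnn : ∀ η ∈ s.erase x₀,
      0 ≤ (w η / w x₀) * Real.exp ((η - x₀) * (Real.sqrt r * z) - r * (η - x₀) ^ 2 / 2) := by
    intro η hη
    have := hw η (Finset.mem_of_mem_erase hη)
    have := hw x₀ hx₀
    positivity
  refine le_trans (my_log_one_add_le (Finset.sum_nonneg hnn)) ?_
  have h2 := my_sqrt_sum_le (s.erase x₀) _ hnn
  have h3 : ∀ η ∈ s.erase x₀,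
      Real.sqrt ((w η / w x₀) * Real.exp ((η - x₀) * (Real.sqrt r * z) - r * (η - x₀) ^ 2 / 2))
      = Real.sqrt (w η / w x₀) *
          Real.exp (((η - x₀) * (Real.sqrt r * z) - r * (η - x₀) ^ 2 / 2) / 2) := by
    intro η hη
    rw [Real.sqrt_mul (by
      have := hw η (Finset.mem_of_mem_erase hη); have := hw x₀ hx₀; positivity),
      Real.exp_half]
  rw [Finset.sum_congr rfl h3] at h2
  linarith

lemma integrable_bound_fn (r : ℝ) :
    Integrable (fun z => 2 * ∑ η ∈ s.erase x₀,
      Real.sqrt (w η / w x₀) *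
        Real.exp (((η - x₀) * (Real.sqrt r * z) - r * (η - x₀) ^ 2 / 2) / 2))
      (gaussianReal 0 1) := by
  refine Integrable.const_mul ?_ 2
  refine integrable_finset_sum _ fun η _ => ?_
  have heq : ∀ z : ℝ, Real.sqrt (w η / w x₀) *
      Real.exp (((η - x₀) * (Real.sqrt r * z) - r * (η - x₀) ^ 2 / 2) / 2)
      = Real.sqrt (w η / w x₀) *
          Real.exp (((η - x₀) * Real.sqrt r / 2) * z + (-(r * (η - x₀) ^ 2 / 4))) := by
    intro z; congr 1; ring
  simp only [heq]
  exact (gauss_integrable_exp_linear _ _).const_mul _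

lemma integral_logT_le (hw : ∀ x ∈ s, 0 < w x) (hx₀ : x₀ ∈ s) {r : ℝ} (hr : 0 ≤ r) :
    ∫ z, Real.log (Tfun w s x₀ r z) ∂(gaussianReal 0 1)
      ≤ 2 * ∑ η ∈ s.erase x₀,
          Real.sqrt (w η / w x₀) * Real.exp (-(r * (η - x₀) ^ 2) / 8) := by
  have hmono := integral_mono (μ := gaussianReal 0 1) (integrable_logT hw hx₀ r)
    (integrable_bound_fn (w := w) (s := s) (x₀ := x₀) r) (fun z => logT_le hw hx₀ r z)
  refine le_trans hmono (le_of_eq ?_)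
  rw [integral_const_mul]
  congr 1
  rw [integral_finset_sum _ (fun η _ => by
    have heq : ∀ z : ℝ, Real.sqrt (w η / w x₀) *
        Real.exp (((η - x₀) * (Real.sqrt r * z) - r * (η - x₀) ^ 2 / 2) / 2)
        = Real.sqrt (w η / w x₀) *
            Real.exp (((η - x₀) * Real.sqrt r / 2) * z + (-(r * (η - x₀) ^ 2 / 4))) := by
      intro z; congr 1; ring
    simp only [heq]
    exact (gauss_integrable_exp_linear _ _).const_mul _)]
  refine Finset.sum_congr rfl fun η hη => ?_
  have heq : ∀ z : ℝ, Real.sqrt (w η / w x₀) *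
      Real.exp (((η - x₀) * (Real.sqrt r * z) - r * (η - x₀) ^ 2 / 2) / 2)
      = Real.sqrt (w η / w x₀) * Real.exp (-(r * (η - x₀) ^ 2 / 4)) *
          Real.exp (((η - x₀) * Real.sqrt r / 2) * z) := by
    intro z
    rw [mul_assoc, ← Real.exp_add]
    congr 2
    ring
  simp only [heq]
  rw [integral_const_mul, gauss_integral_exp]
  rw [mul_assoc, ← Real.exp_add]
  congr 2
  have hsq : Real.sqrt r ^ 2 = r := Real.sq_sqrt hr
  have h5 : ((η - x₀) * Real.sqrt r / 2) ^ 2 = (η - x₀) ^ 2 * r / 4 := by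
    rw [div_pow, mul_pow, hsq]; ring
  rw [h5]; ring

lemma integral_log_inner (hw : ∀ x ∈ s, 0 < w x) (hx₀ : x₀ ∈ s) (r : ℝ) :
    ∫ z, Real.log (∑ η ∈ s, w η *
        Real.exp ((Real.sqrt r * z + r * x₀) * η - r * η ^ 2 / 2)) ∂(gaussianReal 0 1)
      = Real.log (w x₀) + r * x₀ ^ 2 / 2
        + ∫ z, Real.log (Tfun w s x₀ r z) ∂(gaussianReal 0 1) := by
  have hpoint : ∀ z : ℝ, Real.log (∑ η ∈ s, w η *
      Real.exp ((Real.sqrt r * z + r * x₀) * η - r * η ^ 2 / 2))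
      = ((Real.log (w x₀) + r * x₀ ^ 2 / 2) + (Real.sqrt r * x₀) * z)
          + Real.log (Tfun w s x₀ r z) := by
    intro z
    rw [inner_factor hw hx₀ r z]
    have hT : (0:ℝ) < Tfun w s x₀ r z := lt_of_lt_of_le one_pos (Tfun_ge_one hw hx₀ r z)
    rw [Real.log_mul (mul_pos (hw x₀ hx₀) (Real.exp_pos _)).ne' hT.ne', Real.log_mul (hw x₀ hx₀).ne' (Real.exp_ne_zero _),
      Real.log_exp]
    ring
  rw [integral_congr_ae (Filter.Eventually.of_forall hpoint)]
  have hint1 : Integrable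
      (fun z : ℝ => Real.log (w x₀) + r * x₀ ^ 2 / 2 + Real.sqrt r * x₀ * z)
      (gaussianReal 0 1) := by
    exact (integrable_const _).add (gauss_integrable_id.const_mul _)
  have hint2 : Integrable (fun z : ℝ => Real.sqrt r * x₀ * z) (gaussianReal 0 1) := by
    exact gauss_integrable_id.const_mul _
  rw [integral_add hint1 (integrable_logT hw hx₀ r),
    integral_add (integrable_const _) hint2,
    integral_const, integral_const_mul, gauss_integral_id]
  simp [measure_univ]


lemma gibbs_eq (hw : ∀ x ∈ s, 0 < w x) (hvar : ∑ x ∈ s, w x * x ^ 2 = 1) (r : ℝ) :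
    gibbsLogZFin s w r = r / 2 + (∑ x ∈ s, w x * Real.log (w x))
      + ∑ x₀ ∈ s, w x₀ * ∫ z, Real.log (Tfun w s x₀ r z) ∂(gaussianReal 0 1) := by
  unfold gibbsLogZFin
  rw [Finset.sum_congr rfl (fun x hx => by rw [integral_log_inner hw hx r])]
  have expand : ∀ x ∈ s, w x * (Real.log (w x) + r * x ^ 2 / 2
        + ∫ z, Real.log (Tfun w s x r z) ∂(gaussianReal 0 1))
      = w x * Real.log (w x) + r / 2 * (w x * x ^ 2)
        + w x * ∫ z, Real.log (Tfun w s x r z) ∂(gaussianReal 0 1) := by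
    intro x _; ring
  rw [Finset.sum_congr rfl expand, Finset.sum_add_distrib, Finset.sum_add_distrib,
    ← Finset.mul_sum, hvar, mul_one]
  ring

lemma part1 (hw : ∀ x ∈ s, 0 < w x) (hvar : ∑ x ∈ s, w x * x ^ 2 = 1) :
    Tendsto (fun r => gibbsLogZFin s w r - (r / 2 + ∑ x ∈ s, w x * Real.log (w x)))
      atTop (nhds 0) := by
  have hE : ∀ r : ℝ, gibbsLogZFin s w r - (r / 2 + ∑ x ∈ s, w x * Real.log (w x))
      = ∑ x₀ ∈ s, w x₀ * ∫ z, Real.log (Tfun w s x₀ r z) ∂(gaussianReal 0 1) := by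
    intro r; rw [gibbs_eq hw hvar r]; ring
  have hB : Tendsto (fun r : ℝ => ∑ x₀ ∈ s, w x₀ * (2 * ∑ η ∈ s.erase x₀,
      Real.sqrt (w η / w x₀) * Real.exp (-(r * (η - x₀) ^ 2) / 8))) atTop (nhds 0) := by
    have hterm : ∀ x₀ ∈ s, Tendsto (fun r : ℝ => w x₀ * (2 * ∑ η ∈ s.erase x₀,
        Real.sqrt (w η / w x₀) * Real.exp (-(r * (η - x₀) ^ 2) / 8))) atTop
        (nhds (w x₀ * (2 * ∑ η ∈ s.erase x₀, Real.sqrt (w η / w x₀) * 0))) := by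
      intro x₀ _
      refine Tendsto.const_mul (w x₀) (Tendsto.const_mul 2 ?_)
      refine tendsto_finset_sum (s.erase x₀) fun η hη => ?_
      refine Tendsto.const_mul (Real.sqrt (w η / w x₀)) ?_
      have hd : (0:ℝ) < (η - x₀) ^ 2 := by
        have hne : η - x₀ ≠ 0 := sub_ne_zero.mpr (Finset.mem_erase.mp hη).1
        positivity
      have hb : Tendsto (fun r : ℝ => r * (-((η - x₀) ^ 2 / 8))) atTop atBot :=
        Filter.tendsto_id.atTop_mul_const_of_neg (by linarith)
      have := Real.tendsto_exp_atBot.comp hb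
      exact this.congr (fun r => by simp only [Function.comp_apply]; ring_nf)
    have h := tendsto_finset_sum s hterm
    simpa using h
  refine tendsto_of_tendsto_of_tendsto_of_le_of_le' tendsto_const_nhds hB ?_ ?_
  · refine Filter.Eventually.of_forall fun r => ?_
    rw [hE r]
    refine Finset.sum_nonneg fun x₀ hx₀ => mul_nonneg (hw x₀ hx₀).le ?_
    exact integral_nonneg fun z => Real.log_nonneg (Tfun_ge_one hw hx₀ r z)
  · filter_upwards [Filter.eventually_ge_atTop (0:ℝ)] with r hr
    rw [hE r]
    exact Finset.sum_le_sum fun x₀ hx₀ =>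
      mul_le_mul_of_nonneg_left (integral_logT_le hw hx₀ hr) (hw x₀ hx₀).le

/-- High-SNR limit for a discrete prior of zero mean and unit variance: the free
entropy satisfies `Φ(r) = r/2 + E_H ln P_X({H}) + o(1)` as `r → ∞`, and along a
saddle branch with `r* → ∞`, `λ(1-q*) → 0`, `λ(1-q*²) → 0`, the potential
`ι(r*,q*;α,λ)` converges to the Shannon entropy `H(X) = -∑ₓ P_X(x) ln P_X(x)`. -/
theorem iotaPot_highSNR_limit (s : Finset ℝ) (hs : s.Nonempty) (w : ℝ → ℝ)
    (hw : ∀ x ∈ s, 0 < w x) (hw1 : ∑ x ∈ s, w x = 1)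
    (hmean : ∑ x ∈ s, w x * x = 0) (hvar : ∑ x ∈ s, w x * x ^ 2 = 1)
    (α : ℝ) (hα : 0 < α)
    (rs qs : ℝ → ℝ)
    (hsaddle : ∀ lam, rs lam = lam * qs lam / (1 + lam * α * (1 - qs lam ^ 2)))
    (hrinf : Tendsto rs atTop atTop)
    (hq1 : Tendsto (fun lam => lam * (1 - qs lam)) atTop (nhds 0))
    (hq2 : Tendsto (fun lam => lam * (1 - qs lam ^ 2)) atTop (nhds 0)) :
    Tendsto (fun r => gibbsLogZFin s w r - (r / 2 + ∑ x ∈ s, w x * Real.log (w x)))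
      atTop (nhds 0)
    ∧
    Tendsto (fun lam => iotaPotFin s w α lam (rs lam) (qs lam))
      atTop (nhds (-∑ x ∈ s, w x * Real.log (w x))) := by
  have hpart1 := part1 hw hvar
  refine ⟨hpart1, ?_⟩
  set C := ∑ x ∈ s, w x * Real.log (w x) with hC
  -- q → 1
  have hq_lim : Tendsto qs atTop (nhds 1) := by
    have h1 : Tendsto (fun lam => 1 - (lam * (1 - qs lam)) * lam⁻¹) atTop (nhds (1 - 0 * 0)) :=
      tendsto_const_nhds.sub (hq1.mul tendsto_inv_atTop_zero)
    rw [show (1:ℝ) - 0 * 0 = 1 by ring] at h1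
    refine Tendsto.congr' ?_ h1
    filter_upwards [Filter.eventually_gt_atTop (0:ℝ)] with lam hlam
    field_simp
    ring
  -- r (1 - q) → 0
  have hrq : Tendsto (fun lam => rs lam * (1 - qs lam)) atTop (nhds 0) := by
    have heq : ∀ lam, rs lam * (1 - qs lam)
        = (qs lam * (lam * (1 - qs lam))) / (1 + α * (lam * (1 - qs lam ^ 2))) := by
      intro lam
      rw [hsaddle lam]
      rw [show 1 + lam * α * (1 - qs lam ^ 2) = 1 + α * (lam * (1 - qs lam ^ 2)) by ring]
      rw [div_mul_eq_mul_div]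
      congr 1
      ring
    have hnum : Tendsto (fun lam => qs lam * (lam * (1 - qs lam))) atTop (nhds (1 * 0)) :=
      hq_lim.mul hq1
    have hden : Tendsto (fun lam => 1 + α * (lam * (1 - qs lam ^ 2))) atTop
        (nhds (1 + α * 0)) := tendsto_const_nhds.add (hq2.const_mul α)
    have hdiv := hnum.div hden (by norm_num)
    rw [show (1:ℝ) * 0 / (1 + α * 0) = 0 by norm_num] at hdiv
    exact hdiv.congr (fun lam => (heq lam).symm)
  -- log term → 0
  have hlog : Tendsto (fun lam => (1 / (4 * α)) * Real.log (1 + lam * α * (1 - qs lam ^ 2)))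
      atTop (nhds 0) := by
    have h1 : Tendsto (fun lam => 1 + lam * α * (1 - qs lam ^ 2)) atTop (nhds (1 + α * 0)) := by
      have h0 : Tendsto (fun lam : ℝ => (1:ℝ) + α * (lam * (1 - qs lam ^ 2))) atTop
          (nhds (1 + α * 0)) := tendsto_const_nhds.add (hq2.const_mul α)
      exact h0.congr (fun lam => by ring)
    rw [show (1:ℝ) + α * 0 = 1 by ring] at h1
    have h2 : Tendsto (fun lam => Real.log (1 + lam * α * (1 - qs lam ^ 2))) atTop
        (nhds (Real.log 1)) := ((Real.continuousAt_log one_ne_zero).tendsto).comp h1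
    rw [Real.log_one] at h2
    have := h2.const_mul (1 / (4 * α))
    rw [mul_zero] at this
    exact this
  -- gibbs term along the branch
  have hgib : Tendsto (fun lam => gibbsLogZFin s w (rs lam) - (rs lam / 2 + C)) atTop
      (nhds 0) := hpart1.comp hrinf
  have hfinal := ((hgib.neg.sub (hrq.div_const 2)).add hlog).sub_const C
  rw [show -(0:ℝ) - 0 / 2 + 0 - C = -C by ring] at hfinal
  exact hfinal.congr (fun lam => by simp only [iotaPotFin]; ring)
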